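/- arXiv:1803.06279 — 4 statements merged into one kernel-verified Lean document; each statement's English description precedes it below -/
import Mathlib

section
/- Let d ≥ 1 and let B̄ ∈ M_d(ℂ) be a ladder matrix, i.e. B̄ = Σ_{k=1}^{d−1} b_k E_{k+1,k} with b_k ≠ 0 for every k ∈ {1,…,d−1}. If X ∈ M_d(ℂ) satisfies X·B̄ = B̄·X and X·B̄† = B̄†·X, then there exists λ ∈ ℂ such that X = λ·1_d. Equivalently, the commutant {B̄, B̄†}′ equals ℂ·1_d. (Proposition 1 of the paper.) -/
/-!
The kernel of `B̄` is spanned by the last basis vector `e_{d-1}`. Since `X` commutes with `B̄`, it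
preserves this kernel, so `e_{d-1}` is an eigenvector of `X`, with eigenvalue `c` say. Since `X`
also commutes with `B̄†`, which maps `e_{k+1}` to a nonzero multiple of `e_k`, each basis vector
`e_k` is then an eigenvector of `X` for the same eigenvalue `c`.
-/

open Matrix

/-- A *ladder matrix* `B̄ ∈ M_d(ℂ)`: all entries vanish except the
subdiagonal ones `B̄_{k+1,k}`, all of which are nonzero. -/
def IsLadder {d : ℕ} (B : Matrix (Fin d) (Fin d) ℂ) : Prop :=
  (∀ i j : Fin d, (i : ℕ) ≠ (j : ℕ) + 1 → B i j = 0) ∧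
  ∀ (j : Fin d) (h : (j : ℕ) + 1 < d), B ⟨(j : ℕ) + 1, h⟩ j ≠ 0

theorem Matrix.mulVec_mulVec_eq_smul_of_commute {m R : Type*} [Fintype m] [CommSemiring R]
    {X A : Matrix m m R} (hXA : Commute X A) {v : m → R} {c : R} (hv : X *ᵥ v = c • v) :
    X *ᵥ (A *ᵥ v) = c • (A *ᵥ v) := by
  rw [mulVec_mulVec, hXA.eq, ← mulVec_mulVec, hv, mulVec_smul]

namespace IsLadder

variable {n : ℕ} {B : Matrix (Fin (n + 1)) (Fin (n + 1)) ℂ}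

theorem apply_of_ne_succ (hB : IsLadder B) {i j : Fin (n + 1)} (h : (i : ℕ) ≠ j + 1) :
    B i j = 0 :=
  hB.1 i j h

theorem apply_succ_castSucc_ne_zero (hB : IsLadder B) (j : Fin n) :
    B j.succ j.castSucc ≠ 0 :=
  hB.2 j.castSucc (by simp)

theorem mulVec_single_last (hB : IsLadder B) : B *ᵥ Pi.single (Fin.last n) 1 = 0 := by
  ext i
  simp only [mulVec_single_one, col_apply, Pi.zero_apply]
  exact hB.apply_of_ne_succ (by rw [Fin.val_last]; omega)

theorem mulVec_apply_succ (hB : IsLadder B) (v : Fin (n + 1) → ℂ) (j : Fin n) :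
    (B *ᵥ v) j.succ = B j.succ j.castSucc * v j.castSucc :=
  Fintype.sum_eq_single (f := fun k => B j.succ k * v k) _ fun k hk => by
    rw [hB.apply_of_ne_succ (by simpa [Fin.ext_iff] using Ne.symm hk), zero_mul]

theorem eq_smul_single_last_of_mulVec_eq_zero (hB : IsLadder B) {v : Fin (n + 1) → ℂ}
    (hv : B *ᵥ v = 0) : v = v (Fin.last n) • Pi.single (Fin.last n) 1 := by
  ext i
  induction i using Fin.lastCases with
  | last => simp
  | cast j =>
    have h := congrFun hv j.succ
    rw [hB.mulVec_apply_succ, Pi.zero_apply] at h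
    simpa [(Fin.castSucc_lt_last j).ne] using
      (mul_eq_zero.mp h).resolve_left (hB.apply_succ_castSucc_ne_zero j)

theorem conjTranspose_mulVec_single_succ (hB : IsLadder B) (j : Fin n) :
    Bᴴ *ᵥ Pi.single j.succ 1 = star (B j.succ j.castSucc) • Pi.single j.castSucc 1 := by
  ext i
  rw [mulVec_single_one, col_apply, conjTranspose_apply, Pi.smul_apply]
  by_cases hi : i = j.castSucc
  · simp [hi]
  · rw [hB.apply_of_ne_succ (by simpa [Fin.ext_iff] using Ne.symm hi)]
    simp [hi]

end IsLadder

/-- Proposition 1: the commutant of `{B̄, B̄†}` is trivial for a ladder matrix `B̄`. -/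
theorem commutant_of_ladder_trivial {d : ℕ} (hd : 1 ≤ d)
    (B : Matrix (Fin d) (Fin d) ℂ) (hB : IsLadder B)
    (X : Matrix (Fin d) (Fin d) ℂ)
    (h1 : X * B = B * X) (h2 : X * Bᴴ = Bᴴ * X) :
    ∃ c : ℂ, X = c • (1 : Matrix (Fin d) (Fin d) ℂ) := by
  obtain ⟨n, rfl⟩ : ∃ n, d = n + 1 := ⟨d - 1, by omega⟩
  set e : Fin (n + 1) → Fin (n + 1) → ℂ := fun i => Pi.single i 1
  set c := X (Fin.last n) (Fin.last n)
  have h_last : X *ᵥ e (Fin.last n) = c • e (Fin.last n) := by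
    have h_ker : B *ᵥ (X *ᵥ e (Fin.last n)) = 0 := by
      rw [mulVec_mulVec, ← h1, ← mulVec_mulVec, hB.mulVec_single_last, mulVec_zero]
    simpa [e, c] using hB.eq_smul_single_last_of_mulVec_eq_zero h_ker
  have h_all : ∀ i, X *ᵥ e i = c • e i := by
    refine Fin.reverseInduction h_last fun j hj => ?_
    have h := mulVec_mulVec_eq_smul_of_commute h2 hj
    rw [hB.conjTranspose_mulVec_single_succ, mulVec_smul, smul_comm] at h
    exact smul_right_injective _ (star_ne_zero.mpr (hB.apply_succ_castSucc_ne_zero j)) h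
  refine ⟨c, Matrix.ext fun i j => ?_⟩
  simpa [e, one_apply, Pi.single_apply] using congrFun (h_all j) i
end

section
/- Let d ≥ 2, let B̄ ∈ M_d(ℂ) be a ladder matrix with all subdiagonal entries nonzero, and suppose X ∈ M_d(ℂ) commutes with both B̄ and B̄†. Then for every k with 2 ≤ k ≤ d one has X_{k−1,k−1} = X_{k,k}; consequently all diagonal entries of X are equal to X_{1,1}. (Diagonal-entry step in the proof of Proposition 1.) -/
/-!
Since `B̄` has a single nonzero entry `b_k` in column `k`, the `(k+1, k)` entry of
`X B̄ = B̄ X` reads `X_{k+1,k+1} b_k = b_k X_{k,k}`, and `b_k ≠ 0`.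
-/

open Matrix

theorem Fin.apply_eq_apply_zero_of_forall_apply_eq_apply_succ {α : Type*} {d : ℕ}
    {f : Fin d → α}
    (hf : ∀ (k : Fin d) (h : (k : ℕ) + 1 < d), f k = f ⟨(k : ℕ) + 1, h⟩)
    (k : Fin d) : f k = f ⟨0, k.pos⟩ := by
  obtain ⟨n, hn⟩ := k
  induction n with
  | zero => rfl
  | succ m ih => exact (hf ⟨m, by omega⟩ hn).symm.trans (ih (by omega))

namespace IsLadder

variable {d : ℕ} {B : Matrix (Fin d) (Fin d) ℂ}

theorem mul_apply_succ (hB : IsLadder B) (X : Matrix (Fin d) (Fin d) ℂ) (k : Fin d)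
    (h : (k : ℕ) + 1 < d) :
    (X * B) ⟨(k : ℕ) + 1, h⟩ k =
      X ⟨(k : ℕ) + 1, h⟩ ⟨(k : ℕ) + 1, h⟩ * B ⟨(k : ℕ) + 1, h⟩ k := by
  rw [mul_apply, Finset.sum_eq_single ⟨(k : ℕ) + 1, h⟩]
  · intro l _ hl
    rw [hB.1 l k fun hc => hl (Fin.ext hc), mul_zero]
  · simp

theorem apply_succ_mul (hB : IsLadder B) (X : Matrix (Fin d) (Fin d) ℂ) (k : Fin d)
    (h : (k : ℕ) + 1 < d) :
    (B * X) ⟨(k : ℕ) + 1, h⟩ k = B ⟨(k : ℕ) + 1, h⟩ k * X k k := by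
  rw [mul_apply, Finset.sum_eq_single k]
  · intro l _ hl
    rw [hB.1 _ l fun hc => hl (Fin.ext (by simp at hc; omega)), zero_mul]
  · simp

theorem apply_self_eq_apply_succ_of_commute (hB : IsLadder B) {X : Matrix (Fin d) (Fin d) ℂ}
    (hX : Commute X B) (k : Fin d) (h : (k : ℕ) + 1 < d) :
    X k k = X ⟨(k : ℕ) + 1, h⟩ ⟨(k : ℕ) + 1, h⟩ := by
  have hentry := congrFun (congrFun hX.eq ⟨(k : ℕ) + 1, h⟩) k
  rw [hB.mul_apply_succ, hB.apply_succ_mul, mul_comm] at hentry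
  exact (mul_left_cancel₀ (hB.2 k h) hentry).symm

end IsLadder

/-- Diagonal-entry step in the proof of Proposition 1: if `X` commutes with a ladder
matrix `B̄` and with `B̄†`, then consecutive diagonal entries of `X` coincide, and hence
all diagonal entries of `X` equal the top-left entry.
(Rows and columns are indexed from `0` here.) -/
theorem ladder_commutant_diagonal {d : ℕ} (hd : 2 ≤ d)
    (B : Matrix (Fin d) (Fin d) ℂ) (hB : IsLadder B)
    (X : Matrix (Fin d) (Fin d) ℂ)
    (h1 : X * B = B * X) :
    (∀ (k : Fin d) (h : (k : ℕ) + 1 < d),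
        X k k = X ⟨(k : ℕ) + 1, h⟩ ⟨(k : ℕ) + 1, h⟩) ∧
    (∀ k : Fin d, X k k = X ⟨0, by omega⟩ ⟨0, by omega⟩) := by
  have hstep := hB.apply_self_eq_apply_succ_of_commute h1
  exact ⟨hstep,
    Fin.apply_eq_apply_zero_of_forall_apply_eq_apply_succ (f := fun k => X k k) hstep⟩
end

section
/- (Commutant-triviality content of Theorem 1.) Let d ≥ 1, let H ∈ M_d(ℂ) be Hermitian, and let {B_i}_{i ∈ I} be a finite family of matrices in M_d(ℂ). Suppose there exist complex coefficients α₀ and (α_i, β_i)_{i∈I} such that the matrix M = α₀·H + Σ_{i∈I} (α_i·B_i + β_i·B_i†), together with a unitary matrix U ∈ M_d(ℂ), satisfies: U·M·U† is a ladder matrix B̄ = Σ_{k=1}^{d−1} b_k E_{k+1,k} with all b_k ≠ 0, or U·M·U† is the conjugate transpose of such a ladder matrix. Then every X ∈ M_d(ℂ) that commutes with H, with every B_i, and with every B_i† is a scalar multiple of the identity: X = λ·1_d for some λ ∈ ℂ. -/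
/-!
`X` commutes with `M` and, `H` being Hermitian, with `M†`; so `Y = U X U†` commutes with a ladder
matrix `L` and with `L†`. The kernel of `L†` is `ℂ e₀`, hence `Y e₀ = Y₀₀ e₀`; and
`L e_k = b_k e_{k+1}` with `b_k ≠ 0`, so `e₀` is cyclic for `L` and the columns of `Y - Y₀₀ • 1`
vanish one after the other.
-/

open Matrix

theorem Commute.smul_add_sum_smul_add_smul {R A I : Type*} [CommSemiring R] [Semiring A]
    [Algebra R A] [Fintype I] {x a : A} {b c : I → A} (ha : Commute x a)
    (hb : ∀ i, Commute x (b i)) (hc : ∀ i, Commute x (c i)) (r : R) (s t : I → R) :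
    Commute x (r • a + ∑ i, (s i • b i + t i • c i)) :=
  (ha.smul_right r).add_right <| Commute.sum_right _ _ _ fun i _ ↦
    ((hb i).smul_right (s i)).add_right ((hc i).smul_right (t i))

namespace IsLadder

variable {d : ℕ} {L : Matrix (Fin d) (Fin d) ℂ}

theorem mul_apply_of_succ_lt (hL : IsLadder L) (A : Matrix (Fin d) (Fin d) ℂ) (i j : Fin d)
    (h : (j : ℕ) + 1 < d) : (A * L) i j = A i ⟨j + 1, h⟩ * L ⟨j + 1, h⟩ j := by
  rw [mul_apply]
  refine Finset.sum_eq_single _ (fun k _ hk ↦ ?_) (absurd (Finset.mem_univ _))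
  rw [hL.1 k j fun hkj ↦ hk (Fin.ext hkj), mul_zero]

theorem conjTranspose_mul_apply_of_succ_lt (hL : IsLadder L) (A : Matrix (Fin d) (Fin d) ℂ)
    (i j : Fin d) (h : (i : ℕ) + 1 < d) :
    (Lᴴ * A) i j = star (L ⟨i + 1, h⟩ i) * A ⟨i + 1, h⟩ j := by
  rw [mul_apply]
  refine Finset.sum_eq_single _ (fun k _ hk ↦ ?_) (absurd (Finset.mem_univ _))
  rw [conjTranspose_apply, hL.1 k i fun hki ↦ hk (Fin.ext hki), star_zero, zero_mul]

theorem mul_conjTranspose_apply_zero (hL : IsLadder L) (A : Matrix (Fin d) (Fin d) ℂ)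
    (i : Fin d) (hd : 0 < d) : (A * Lᴴ) i ⟨0, hd⟩ = 0 := by
  rw [mul_apply]
  refine Finset.sum_eq_zero fun k _ ↦ ?_
  rw [conjTranspose_apply, hL.1 ⟨0, hd⟩ k (by simp), star_zero, mul_zero]

theorem apply_succ_zero_eq_zero_of_commute_conjTranspose (hL : IsLadder L)
    {Y : Matrix (Fin d) (Fin d) ℂ} (hY : Commute Y Lᴴ) (i : Fin d) (h : (i : ℕ) + 1 < d) :
    Y ⟨i + 1, h⟩ ⟨0, by omega⟩ = 0 := by
  have hYi := congr_fun₂ hY.eq i ⟨0, by omega⟩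
  rw [hL.mul_conjTranspose_apply_zero, hL.conjTranspose_mul_apply_of_succ_lt _ _ _ h] at hYi
  exact (mul_eq_zero.1 hYi.symm).resolve_left (star_ne_zero.2 (hL.2 i h))

theorem apply_succ_eq_zero_of_commute (hL : IsLadder L) {Z : Matrix (Fin d) (Fin d) ℂ}
    (hZ : Commute Z L) (j : Fin d) (h : (j : ℕ) + 1 < d) (hj : ∀ i, Z i j = 0) (i : Fin d) :
    Z i ⟨j + 1, h⟩ = 0 := by
  have hZi := congr_fun₂ hZ.eq i j
  rw [hL.mul_apply_of_succ_lt _ _ _ h, mul_apply,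
    Finset.sum_eq_zero fun k _ ↦ by rw [hj, mul_zero]] at hZi
  exact (mul_eq_zero.1 hZi).resolve_right (hL.2 j h)

theorem eq_smul_one_of_commute (hL : IsLadder L) {Y : Matrix (Fin d) (Fin d) ℂ}
    (hYL : Commute Y L) (hYL' : Commute Y Lᴴ) : ∃ c : ℂ, Y = c • 1 := by
  rcases Nat.eq_zero_or_pos d with rfl | hd
  · exact ⟨0, Subsingleton.elim _ _⟩
  set Z := Y - Y ⟨0, hd⟩ ⟨0, hd⟩ • 1
  have hZL : Commute Z L := hYL.sub_left ((Commute.one_left L).smul_left _)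
  have hcol : ∀ (j : ℕ) (hj : j < d) (i : Fin d), Z i ⟨j, hj⟩ = 0 := by
    intro j
    induction j with
    | zero =>
      rintro hj ⟨_ | i, hi⟩
      · simp [Z]
      · simpa [Z] using hL.apply_succ_zero_eq_zero_of_commute_conjTranspose hYL' ⟨i, by omega⟩ hi
    | succ j ih => exact fun hj ↦ hL.apply_succ_eq_zero_of_commute hZL ⟨j, by omega⟩ hj (ih _)
  exact ⟨Y ⟨0, hd⟩ ⟨0, hd⟩, sub_eq_zero.1 (ext fun i j ↦ hcol j j.2 i)⟩

end IsLadder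

theorem theorem_one_commutant_trivial_general {d : ℕ}
    {I : Type*} [Fintype I]
    (H : Matrix (Fin d) (Fin d) ℂ) (hH : H.IsHermitian)
    (B : I → Matrix (Fin d) (Fin d) ℂ)
    (α₀ : ℂ) (α β : I → ℂ)
    (U : Matrix (Fin d) (Fin d) ℂ)
    (hU : U * Uᴴ = 1 ∧ Uᴴ * U = 1)
    (hM : IsLadder (U * (α₀ • H + ∑ i, (α i • B i + β i • (B i)ᴴ)) * Uᴴ) ∨
          IsLadder ((U * (α₀ • H + ∑ i, (α i • B i + β i • (B i)ᴴ)) * Uᴴ)ᴴ))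
    (X : Matrix (Fin d) (Fin d) ℂ)
    (hXH : X * H = H * X)
    (hXB : ∀ i, X * B i = B i * X)
    (hXBd : ∀ i, X * (B i)ᴴ = (B i)ᴴ * X) :
    ∃ c : ℂ, X = c • (1 : Matrix (Fin d) (Fin d) ℂ) := by
  set M := α₀ • H + ∑ i, (α i • B i + β i • (B i)ᴴ)
  have hXM : Commute X M := Commute.smul_add_sum_smul_add_smul hXH hXB hXBd α₀ α β
  have hXM' : Commute X Mᴴ := by
    have hMH : Mᴴ = star α₀ • H + ∑ i, (star (α i) • (B i)ᴴ + star (β i) • B i) := by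
      simp [M, conjTranspose_sum, hH.eq]
    rw [hMH]
    exact Commute.smul_add_sum_smul_add_smul hXH hXBd hXB _ _ _
  let φ := Unitary.conjStarAlgAut ℂ _ (⟨U, Unitary.mem_iff.2 hU.symm⟩ : unitary _)
  have hφM : Commute (φ X) (φ M)ᴴ := by
    simpa only [← star_eq_conjTranspose, map_star] using hXM'.map φ
  obtain ⟨c, hc⟩ : ∃ c : ℂ, φ X = c • 1 := by
    rcases hM with hL | hL
    · exact hL.eq_smul_one_of_commute (hXM.map φ) hφM
    · exact hL.eq_smul_one_of_commute hφM (by rw [conjTranspose_conjTranspose]; exact hXM.map φ)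
  exact ⟨c, EquivLike.injective φ (by rw [hc, map_smul, map_one])⟩

/-- Commutant-triviality content of Theorem 1: if some complex linear combination
`M = α₀ H + Σᵢ (αᵢ Bᵢ + βᵢ Bᵢ†)` is unitarily equivalent to a ladder matrix or to the
conjugate transpose of a ladder matrix, then the commutant `{H, Bᵢ, Bᵢ†}'` is trivial. -/
theorem theorem_one_commutant_trivial {d : ℕ} (hd : 1 ≤ d)
    {I : Type*} [Fintype I]
    (H : Matrix (Fin d) (Fin d) ℂ) (hH : H.IsHermitian)
    (B : I → Matrix (Fin d) (Fin d) ℂ)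
    (α₀ : ℂ) (α β : I → ℂ)
    (U : Matrix (Fin d) (Fin d) ℂ)
    (hU : U * Uᴴ = 1 ∧ Uᴴ * U = 1)
    (hM : IsLadder (U * (α₀ • H + ∑ i, (α i • B i + β i • (B i)ᴴ)) * Uᴴ) ∨
          IsLadder ((U * (α₀ • H + ∑ i, (α i • B i + β i • (B i)ᴴ)) * Uᴴ)ᴴ))
    (X : Matrix (Fin d) (Fin d) ℂ)
    (hXH : X * H = H * X)
    (hXB : ∀ i, X * B i = B i * X)
    (hXBd : ∀ i, X * (B i)ᴴ = (B i)ᴴ * X) :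
    ∃ c : ℂ, X = c • (1 : Matrix (Fin d) (Fin d) ℂ) :=
  theorem_one_commutant_trivial_general H hH B α₀ α β U hU hM X hXH hXB hXBd
end

section
/- (Commutant-triviality content of Theorem 2.) Let N ≥ 1 and d_1,…,d_N be positive integers, let H be a Hermitian matrix on ℂ^{d_1} ⊗ ⋯ ⊗ ℂ^{d_N}, and let {B_i}_{i∈I} be a finite family of matrices on the same space. Suppose there exist, for each j ∈ {1,…,N}, complex coefficients α_{0,j} and (α_{i,j}, β_{i,j})_{i∈I} defining M_j = α_{0,j}·H + Σ_{i∈I} (α_{i,j}·B_i + β_{i,j}·B_i†), and a single unitary matrix U on ℂ^{d_1} ⊗ ⋯ ⊗ ℂ^{d_N} such that for every j: U·M_j·U† = B̄^{(N)}_j or U·M_j·U† = (B̄^{(N)}_j)†, where B̄^{(N)}_j = 1 ⊗ ⋯ ⊗ B̄_j ⊗ ⋯ ⊗ 1 acts as a ladder matrix B̄_j ∈ M_{d_j}(ℂ) (all subdiagonal entries nonzero) on the j-th factor and as the identity on all other factors. Then every matrix X that commutes with H, with every B_i, and with every B_i† is a scalar multiple of the identity: X = λ·1 for some λ ∈ ℂ.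 -/
/-!
Conjugating by `U`, the matrix `Y = U X U†` commutes with every `B̄⁽ᴺ⁾_j` and its adjoint, since `X`
commutes with every `M_j` and, `H` being Hermitian, with every `M_j†`. Fixing all coordinates but
the `j`-th, the corresponding block of `Y` then commutes with the ladder `B̄_j` and with `B̄_j†`.
A matrix `A` commuting with a ladder `L` satisfies `A_{i,k+1} L_{k+1,k} = L_{i,i-1} A_{i-1,k}`, so
by induction on the row it vanishes above the diagonal and has constant diagonal; commuting with
`L†` gives the same below the diagonal, because `Aᵀ` commutes with the ladder `conj L`. Hence every
block is scalar, so `Y` is diagonal with a diagonal that is invariant under changing one coordinate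
at a time: `Y`, and with it `X = U† Y U`, is scalar.
-/

open Matrix

open Function

theorem Matrix.IsDiag.exists_eq_smul_one {n R : Type*} [DecidableEq n] [Semiring R]
    {A : Matrix n n R} (hA : A.IsDiag) (hdiag : ∀ i j, A i i = A j j) : ∃ c : R, A = c • 1 := by
  cases isEmpty_or_nonempty n with
  | inl _ => exact ⟨0, Subsingleton.elim _ _⟩
  | inr h =>
    obtain ⟨i₀⟩ := h
    refine ⟨A i₀ i₀, Matrix.ext fun i j => ?_⟩
    by_cases hij : i = j
    · subst hij; simp [hdiag i i₀]
    · simp [hA hij, hij]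

namespace IsLadder

variable {d : ℕ} {L A : Matrix (Fin d) (Fin d) ℂ}

theorem apply_ne_zero (hL : IsLadder L) {i j : Fin d} (h : (i : ℕ) = j + 1) : L i j ≠ 0 := by
  obtain ⟨i, hi⟩ := i
  subst h
  exact hL.2 j hi

theorem map_star (hL : IsLadder L) : IsLadder (L.map star) :=
  ⟨fun i j h => by simp [hL.1 i j h], fun j h => by simpa using hL.2 j h⟩

theorem mul_ladder_apply (hL : IsLadder L) (i : Fin d)
    {j k : Fin d} (hk : (k : ℕ) = j + 1) : (A * L) i j = A i k * L k j := by
  rw [mul_apply, Finset.sum_eq_single k]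
  · intro l _ hl
    rw [hL.1 l j fun h => hl (Fin.ext (h.trans hk.symm)), mul_zero]
  · simp

theorem ladder_mul_apply (hL : IsLadder L)
    {i k : Fin d} (hi : (i : ℕ) = k + 1) (j : Fin d) : (L * A) i j = L i k * A k j := by
  rw [mul_apply, Finset.sum_eq_single k]
  · intro l _ hl
    rw [hL.1 i l fun h => hl (Fin.ext (by omega)), zero_mul]
  · simp

theorem ladder_mul_apply_of_eq_zero (hL : IsLadder L)
    {i : Fin d} (hi : (i : ℕ) = 0) (j : Fin d) : (L * A) i j = 0 :=
  (mul_apply).trans <| Finset.sum_eq_zero fun l _ => by rw [hL.1 i l (by omega), zero_mul]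

theorem apply_eq_zero_of_ladder_mul_apply_eq_zero (hL : IsLadder L) (hA : Commute A L)
    {i j k : Fin d} (hj : (j : ℕ) = k + 1) (h : (L * A) i k = 0) : A i j = 0 := by
  have hAL := congr_fun₂ hA.eq i k
  rw [hL.mul_ladder_apply i hj, h] at hAL
  exact (mul_eq_zero.1 hAL).resolve_right (hL.apply_ne_zero hj)

theorem apply_eq_zero_of_lt (hL : IsLadder L) (hA : Commute A L) {i j : Fin d} (hij : i < j) :
    A i j = 0 := by
  obtain ⟨k, hk⟩ : ∃ k : Fin d, (j : ℕ) = k + 1 := ⟨⟨j - 1, by omega⟩, by dsimp only; omega⟩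
  induction hi : (i : ℕ) generalizing i j k with
  | zero =>
    exact hL.apply_eq_zero_of_ladder_mul_apply_eq_zero hA hk (hL.ladder_mul_apply_of_eq_zero hi k)
  | succ n ih =>
    refine hL.apply_eq_zero_of_ladder_mul_apply_eq_zero hA hk ?_
    have hnk : (⟨n, by omega⟩ : Fin d) < k := by rw [Fin.lt_def]; dsimp only; omega
    rw [hL.ladder_mul_apply (k := ⟨n, by omega⟩) hi,
      ih hnk ⟨k - 1, by omega⟩ (by dsimp only; omega) rfl, mul_zero]

theorem apply_self_eq_of_eq_succ (hL : IsLadder L) (hA : Commute A L) {i k : Fin d}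
    (hi : (i : ℕ) = k + 1) : A i i = A k k := by
  have h := congr_fun₂ hA.eq i k
  rw [hL.mul_ladder_apply i hi, hL.ladder_mul_apply hi, mul_comm] at h
  exact mul_left_cancel₀ (hL.apply_ne_zero hi) h

theorem apply_self_eq (hL : IsLadder L) (hA : Commute A L) (i j : Fin d) : A i i = A j j := by
  suffices h : ∀ i : Fin d, A i i = A ⟨0, i.pos⟩ ⟨0, i.pos⟩ from (h i).trans (h j).symm
  intro i
  induction hi : (i : ℕ) generalizing i with
  | zero => congr 1 <;> exact Fin.ext hi
  | succ n ih => rw [hL.apply_self_eq_of_eq_succ hA (k := ⟨n, by omega⟩) hi, ih _ rfl]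

theorem exists_eq_smul_one_of_commute (hL : IsLadder L) (h : Commute A L) (h' : Commute A Lᴴ) :
    ∃ c : ℂ, A = c • 1 := by
  have hT : Commute Aᵀ (L.map star) := by
    have hT' := congrArg transpose h'.eq
    simp only [transpose_mul] at hT'
    exact hT'.symm
  refine IsDiag.exists_eq_smul_one (fun i j hij => ?_) (hL.apply_self_eq h)
  rcases lt_or_gt_of_ne hij with hlt | hgt
  · exact hL.apply_eq_zero_of_lt h hlt
  · exact hL.map_star.apply_eq_zero_of_lt hT hgt

end IsLadder

theorem Function.eq_of_forall_update_eq {ι : Type*} [Fintype ι] [DecidableEq ι] {κ : ι → Type*}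
    {α : Type*} {f : (∀ i, κ i) → α} (h : ∀ x j a, f (update x j a) = f x) (x y : ∀ i, κ i) :
    f x = f y := by
  suffices ∀ s : Finset ι, f (s.piecewise y x) = f x by
    simpa using (this Finset.univ).symm
  intro s
  induction s using Finset.induction_on with
  | empty => simp
  | insert j s _ ih => rw [Finset.piecewise_insert, h, ih]

theorem Commute.conj_of_mul_eq_one {M : Type*} [Monoid M] {x a u v : M} (h : Commute x a)
    (hvu : v * u = 1) : Commute (u * x * v) (u * a * v) := by
  calc u * x * v * (u * a * v) = u * (x * a) * v := by
        simp only [mul_assoc, ← mul_assoc v u, hvu, one_mul]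
    _ = u * a * v * (u * x * v) := by
        simp only [h.eq, mul_assoc, ← mul_assoc v u, hvu, one_mul]

namespace Matrix

section FactorBlock

variable {ι : Type*} [DecidableEq ι] {κ : ι → Type*} {R : Type*}

def factorBlock (Y : Matrix (∀ i, κ i) (∀ i, κ i) R) (j : ι) (x y : ∀ i, κ i) :
    Matrix (κ j) (κ j) R :=
  of fun a b => Y (update x j a) (update y j b)

theorem factorBlock_transpose (Y : Matrix (∀ i, κ i) (∀ i, κ i) R) (j : ι) (x y : ∀ i, κ i) :
    Yᵀ.factorBlock j x y = (Y.factorBlock j y x)ᵀ :=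
  rfl

variable [Fintype ι] [∀ i, DecidableEq (κ i)]

theorem exists_eq_smul_one_of_factorBlock [Semiring R] {Y : Matrix (∀ i, κ i) (∀ i, κ i) R}
    (h : ∀ j x y, ∃ c : R, Y.factorBlock j x y = c • 1) : ∃ c : R, Y = c • 1 := by
  refine IsDiag.exists_eq_smul_one (fun x y hxy => ?_)
    (Function.eq_of_forall_update_eq (f := fun x => Y x x) fun x j a => ?_)
  · obtain ⟨j, hj⟩ := Function.ne_iff.1 hxy
    obtain ⟨c, hc⟩ := h j x y
    simpa [factorBlock, hj] using congr_fun₂ hc (x j) (y j)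
  · obtain ⟨c, hc⟩ := h j x x
    have hxx := congr_fun₂ hc (x j) (x j)
    have haa := congr_fun₂ hc a a
    simp only [factorBlock, of_apply, update_eq_self] at hxx haa
    simp [hxx, haa]

variable [CommSemiring R]

/-- `1 ⊗ ⋯ ⊗ c ⊗ ⋯ ⊗ 1`, with `c` acting on the `j`-th factor. -/
def onFactor (j : ι) (c : Matrix (κ j) (κ j) R) : Matrix (∀ i, κ i) (∀ i, κ i) R :=
  of fun x y => c (x j) (y j) * ∏ i ∈ Finset.univ.erase j, if x i = y i then 1 else 0

theorem onFactor_apply (j : ι) (c : Matrix (κ j) (κ j) R) (x y : ∀ i, κ i) :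
    onFactor j c x y = if x = update y j (x j) then c (x j) (y j) else 0 := by
  simp [onFactor, Finset.prod_boole, eq_update_iff]

theorem onFactor_transpose (j : ι) (c : Matrix (κ j) (κ j) R) :
    (onFactor j c)ᵀ = onFactor j cᵀ := by
  ext x y
  simp [onFactor, eq_comm]

theorem onFactor_conjTranspose [StarRing R] (j : ι) (c : Matrix (κ j) (κ j) R) :
    (onFactor j c)ᴴ = onFactor j cᴴ := by
  ext x y
  simp [onFactor, star_prod, apply_ite star, eq_comm]

variable [∀ i, Fintype (κ i)]

theorem sum_mul_onFactor_apply (j : ι) (c : Matrix (κ j) (κ j) R) (g : (∀ i, κ i) → R)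
    (y : ∀ i, κ i) : ∑ w, g w * onFactor j c w y = ∑ a, g (update y j a) * c a (y j) := by
  refine (Fintype.sum_of_injective (update y j) (update_injective y j) _ _ ?_ ?_).symm
  · rintro w hw
    rw [onFactor_apply, if_neg fun h => hw ⟨w j, h.symm⟩, mul_zero]
  · intro a
    simp [onFactor_apply]

theorem factorBlock_mul_onFactor (Y : Matrix (∀ i, κ i) (∀ i, κ i) R) (j : ι)
    (c : Matrix (κ j) (κ j) R) (x y : ∀ i, κ i) :
    (Y * onFactor j c).factorBlock j x y = Y.factorBlock j x y * c := by
  ext a b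
  simp [factorBlock, mul_apply, sum_mul_onFactor_apply]

theorem factorBlock_onFactor_mul (Y : Matrix (∀ i, κ i) (∀ i, κ i) R) (j : ι)
    (c : Matrix (κ j) (κ j) R) (x y : ∀ i, κ i) :
    (onFactor j c * Y).factorBlock j x y = c * Y.factorBlock j x y := by
  rw [← transpose_transpose (onFactor j c * Y), transpose_mul, onFactor_transpose,
    factorBlock_transpose, factorBlock_mul_onFactor, transpose_mul, transpose_transpose,
    ← factorBlock_transpose, transpose_transpose]

end FactorBlock

end Matrix

theorem Commute.factorBlock_onFactor {ι : Type*} [Fintype ι] [DecidableEq ι] {κ : ι → Type*}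
    [∀ i, Fintype (κ i)] [∀ i, DecidableEq (κ i)] {R : Type*} [CommSemiring R]
    {Y : Matrix (∀ i, κ i) (∀ i, κ i) R} {j : ι} {c : Matrix (κ j) (κ j) R}
    (h : Commute Y (onFactor j c)) (x y : ∀ i, κ i) : Commute (Y.factorBlock j x y) c := by
  rw [Commute, SemiconjBy, ← factorBlock_mul_onFactor, h.eq, factorBlock_onFactor_mul]

theorem exists_eq_smul_one_of_commute_onFactor {ι : Type*} [Fintype ι] [DecidableEq ι]
    {d : ι → ℕ} {L : ∀ j, Matrix (Fin (d j)) (Fin (d j)) ℂ} (hL : ∀ j, IsLadder (L j))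
    {Y : Matrix (∀ i, Fin (d i)) (∀ i, Fin (d i)) ℂ} (h : ∀ j, Commute Y (onFactor j (L j)))
    (h' : ∀ j, Commute Y (onFactor j (L j)ᴴ)) : ∃ c : ℂ, Y = c • 1 :=
  exists_eq_smul_one_of_factorBlock fun j x y =>
    (hL j).exists_eq_smul_one_of_commute ((h j).factorBlock_onFactor x y)
      ((h' j).factorBlock_onFactor x y)

theorem theorem_two_commutant_trivial_general {N : ℕ}
    (d : Fin N → ℕ)
    {I : Type*} [Fintype I]
    (H : Matrix ((i : Fin N) → Fin (d i)) ((i : Fin N) → Fin (d i)) ℂ)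
    (hH : H.IsHermitian)
    (B : I → Matrix ((i : Fin N) → Fin (d i)) ((i : Fin N) → Fin (d i)) ℂ)
    (Bbar : ∀ j : Fin N, Matrix (Fin (d j)) (Fin (d j)) ℂ)
    (hBbar : ∀ j, IsLadder (Bbar j))
    (Bbig : ∀ _ : Fin N,
      Matrix ((i : Fin N) → Fin (d i)) ((i : Fin N) → Fin (d i)) ℂ)
    (hBbig : ∀ (j : Fin N) (x y : (i : Fin N) → Fin (d i)),
      Bbig j x y = Bbar j (x j) (y j) *
        ∏ i ∈ Finset.univ.erase j, (if x i = y i then (1 : ℂ) else 0))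
    (α₀ : Fin N → ℂ) (α β : I → Fin N → ℂ)
    (U : Matrix ((i : Fin N) → Fin (d i)) ((i : Fin N) → Fin (d i)) ℂ)
    (hU : U * Uᴴ = 1 ∧ Uᴴ * U = 1)
    (hM : ∀ j : Fin N,
      U * (α₀ j • H + ∑ i, (α i j • B i + β i j • (B i)ᴴ)) * Uᴴ = Bbig j ∨
      U * (α₀ j • H + ∑ i, (α i j • B i + β i j • (B i)ᴴ)) * Uᴴ = (Bbig j)ᴴ)
    (X : Matrix ((i : Fin N) → Fin (d i)) ((i : Fin N) → Fin (d i)) ℂ)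
    (hXH : X * H = H * X)
    (hXB : ∀ i, X * B i = B i * X)
    (hXBd : ∀ i, X * (B i)ᴴ = (B i)ᴴ * X) :
    ∃ c : ℂ,
      X = c • (1 : Matrix ((i : Fin N) → Fin (d i)) ((i : Fin N) → Fin (d i)) ℂ) := by
  set M := fun j => α₀ j • H + ∑ i, (α i j • B i + β i j • (B i)ᴴ)
  have hXM (j : Fin N) : Commute X (M j) :=
    (Commute.smul_right hXH _).add_right <| Commute.sum_right _ _ _ fun i _ =>
      (Commute.smul_right (hXB i) _).add_right (Commute.smul_right (hXBd i) _)
  have hXM' (j : Fin N) : Commute X (M j)ᴴ := by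
    simp only [M, conjTranspose_add, conjTranspose_smul, conjTranspose_sum,
      conjTranspose_conjTranspose, hH.eq]
    exact (Commute.smul_right hXH _).add_right <| Commute.sum_right _ _ _ fun i _ =>
      (Commute.smul_right (hXBd i) _).add_right (Commute.smul_right (hXB i) _)
  have hY (j : Fin N) :
      Commute (U * X * Uᴴ) (Bbig j) ∧ Commute (U * X * Uᴴ) (Bbig j)ᴴ := by
    have h₁ := (hXM j).conj_of_mul_eq_one hU.2
    have h₂ : Commute (U * X * Uᴴ) (U * M j * Uᴴ)ᴴ := by
      simpa only [conjTranspose_mul, conjTranspose_conjTranspose, mul_assoc]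
        using (hXM' j).conj_of_mul_eq_one hU.2
    rcases hM j with h | h <;> rw [h] at h₁ h₂
    · exact ⟨h₁, h₂⟩
    · exact ⟨by simpa only [conjTranspose_conjTranspose] using h₂, h₁⟩
  have hBbig' (j : Fin N) : Bbig j = onFactor j (Bbar j) := Matrix.ext (hBbig j)
  simp only [hBbig', onFactor_conjTranspose] at hY
  obtain ⟨c, hc⟩ :=
    exists_eq_smul_one_of_commute_onFactor hBbar (fun j => (hY j).1) (fun j => (hY j).2)
  refine ⟨c, ?_⟩
  calc X = Uᴴ * U * X * (Uᴴ * U) := by rw [hU.2, one_mul, mul_one]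
    _ = Uᴴ * (U * X * Uᴴ) * U := by simp only [mul_assoc]
    _ = c • 1 := by rw [hc, Matrix.mul_smul, Matrix.mul_one, Matrix.smul_mul, hU.2]

/-- Commutant-triviality content of Theorem 2: on a tensor product
`ℂ^{d₁} ⊗ ⋯ ⊗ ℂ^{d_N}` (matrices indexed by multi-indices), if for each `j` some
complex linear combination `M_j = α₀ⱼ H + Σᵢ (αᵢⱼ Bᵢ + βᵢⱼ Bᵢ†)` is carried by a single
unitary `U` onto `B̄⁽ᴺ⁾_j` or onto `(B̄⁽ᴺ⁾_j)†` — where `B̄⁽ᴺ⁾_j` acts as a ladder matrix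
`B̄_j` on the `j`-th factor and as the identity on the other factors — then the
commutant `{H, Bᵢ, Bᵢ† : i ∈ I}'` is trivial. -/
theorem theorem_two_commutant_trivial {N : ℕ} (hN : 1 ≤ N)
    (d : Fin N → ℕ) (hd : ∀ i, 1 ≤ d i)
    {I : Type*} [Fintype I]
    (H : Matrix ((i : Fin N) → Fin (d i)) ((i : Fin N) → Fin (d i)) ℂ)
    (hH : H.IsHermitian)
    (B : I → Matrix ((i : Fin N) → Fin (d i)) ((i : Fin N) → Fin (d i)) ℂ)
    (Bbar : ∀ j : Fin N, Matrix (Fin (d j)) (Fin (d j)) ℂ)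
    (hBbar : ∀ j, IsLadder (Bbar j))
    (Bbig : ∀ _ : Fin N,
      Matrix ((i : Fin N) → Fin (d i)) ((i : Fin N) → Fin (d i)) ℂ)
    (hBbig : ∀ (j : Fin N) (x y : (i : Fin N) → Fin (d i)),
      Bbig j x y = Bbar j (x j) (y j) *
        ∏ i ∈ Finset.univ.erase j, (if x i = y i then (1 : ℂ) else 0))
    (α₀ : Fin N → ℂ) (α β : I → Fin N → ℂ)
    (U : Matrix ((i : Fin N) → Fin (d i)) ((i : Fin N) → Fin (d i)) ℂ)
    (hU : U * Uᴴ = 1 ∧ Uᴴ * U = 1)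
    (hM : ∀ j : Fin N,
      U * (α₀ j • H + ∑ i, (α i j • B i + β i j • (B i)ᴴ)) * Uᴴ = Bbig j ∨
      U * (α₀ j • H + ∑ i, (α i j • B i + β i j • (B i)ᴴ)) * Uᴴ = (Bbig j)ᴴ)
    (X : Matrix ((i : Fin N) → Fin (d i)) ((i : Fin N) → Fin (d i)) ℂ)
    (hXH : X * H = H * X)
    (hXB : ∀ i, X * B i = B i * X)
    (hXBd : ∀ i, X * (B i)ᴴ = (B i)ᴴ * X) :
    ∃ c : ℂ,
      X = c • (1 : Matrix ((i : Fin N) → Fin (d i)) ((i : Fin N) → Fin (d i)) ℂ) :=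
  theorem_two_commutant_trivial_general d H hH B Bbar hBbar Bbig hBbig α₀ α β U hU hM X hXH hXB hXBd
end
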